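/- arXiv:1401.5958 — 2 statements merged into one kernel-verified Lean document; each statement's English description precedes it below -/
import Mathlib

section
/- For all non-negative integers n, r, k: the value of the Bernoulli polynomial of order -k at r satisfies B_n^{(-k)}(r) = C(n+k, k)^{-1} * S_r(n+r+k, k+r), where B_n^{(α)}(x) are the higher-order Bernoulli polynomials defined by (t/(e^t - 1))^α e^{xt} = ∑_{n≥0} B_n^{(α)}(x) t^n/n!, and S_r is the r-Stirling number of the second kind. Equivalently: n! times the coefficient of t^n in ((e^t - 1)/t)^k e^{rt} equals C(n+k, k)^{-1} * S_r(n+r+k, k+r). -/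
/-- The unsigned `r`-Stirling number of the first kind. -/
def rStirling1 (r : ℕ) : ℕ → ℕ → ℕ
  | 0, k => if r = 0 ∧ k = 0 then 1 else 0
  | n + 1, k =>
    if n + 1 < r then 0
    else if n + 1 = r then (if k = r then 1 else 0)
    else (if k = 0 then 0 else rStirling1 r n (k - 1)) + n * rStirling1 r n k

/-- The `r`-Stirling number of the second kind. -/
def rStirling2 (r : ℕ) : ℕ → ℕ → ℕ
  | 0, k => if r = 0 ∧ k = 0 then 1 else 0
  | n + 1, k =>
    if n + 1 < r then 0
    else if n + 1 = r then (if k = r then 1 else 0)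
    else (if k = 0 then 0 else rStirling2 r n (k - 1)) + k * rStirling2 r n k

/-!
Multiplying by `X ^ k` turns `((e^X - 1) / X) ^ k * e^(rX)` into `F_k = (e^X - 1) ^ k * e^(rX)` and
shifts coefficients by `k`, so it suffices to identify `m! [X^m] F_k` with `k! S_r(m + r, k + r)`.
Since `e^X = (e^X - 1) + 1`, differentiation gives `F_k' = k F_(k-1) + (k + r) F_k`, which on the
normalized coefficients is the defining recurrence of `k! S_r(· + r, k + r)`; both sides equal
`[k = 0]` at `m = 0`. Dividing by `(n + k)! / n!` produces the binomial coefficient.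
-/

open PowerSeries

theorem rStirling2_of_lt {r m j : ℕ} (h : j < r) : rStirling2 r m j = 0 := by
  induction m generalizing j with
  | zero => simp [rStirling2]; omega
  | succ n ih =>
    rw [rStirling2]
    split_ifs <;> first | rfl | omega | simp [ih h, ih (j := j - 1) (by omega)]

theorem rStirling2_self_add (r k : ℕ) : rStirling2 r r (k + r) = if k = 0 then 1 else 0 := by
  cases r <;> simp [rStirling2]

theorem rStirling2_succ_succ {r n : ℕ} (h : r ≤ n) (k : ℕ) :
    rStirling2 r (n + 1) (k + 1) = rStirling2 r n k + (k + 1) * rStirling2 r n (k + 1) := by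
  rw [rStirling2, if_neg (by omega), if_neg (by omega), if_neg (by omega)]
  rfl

theorem rStirling2_succ_self {r n : ℕ} (h : r ≤ n) :
    rStirling2 r (n + 1) r = r * rStirling2 r n r := by
  cases r with
  | zero => simp [rStirling2]
  | succ r => rw [rStirling2_succ_succ h, rStirling2_of_lt (by omega), zero_add]

theorem derivative_rescale {R : Type*} [CommSemiring R] (a : R) (f : R⟦X⟧) :
    d⁄dX R (rescale a f) = C a * rescale a (d⁄dX R f) := by
  ext n
  simp only [coeff_derivative, coeff_rescale, coeff_C_mul]
  ring

theorem X_mul_mk_inv_factorial_succ :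
    X * mk (fun i => (1 : ℚ) / (i + 1).factorial) = exp ℚ - 1 := by
  ext (_ | m) <;> simp [coeff_succ_X_mul, coeff_exp]

theorem mk_pow_div_factorial (q : ℚ) : mk (fun i => q ^ i / i.factorial) = rescale q (exp ℚ) := by
  ext i
  simp [coeff_rescale, coeff_exp, div_eq_mul_inv]

noncomputable def rStirlingEGF (r k : ℕ) : ℚ⟦X⟧ := (exp ℚ - 1) ^ k * rescale (r : ℚ) (exp ℚ)

theorem coeff_zero_rStirlingEGF (r k : ℕ) :
    coeff 0 (rStirlingEGF r k) = if k = 0 then 1 else 0 := by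
  rcases k with _ | k <;> simp [rStirlingEGF, coeff_zero_eq_constantCoeff, constantCoeff_exp]

theorem derivative_rStirlingEGF_zero (r : ℕ) :
    d⁄dX ℚ (rStirlingEGF r 0) = C (r : ℚ) * rStirlingEGF r 0 := by
  simp [rStirlingEGF, derivative_rescale, derivative_exp]

theorem derivative_rStirlingEGF_succ (r k : ℕ) :
    d⁄dX ℚ (rStirlingEGF r (k + 1)) =
      C ((k : ℚ) + 1) * rStirlingEGF r k + C ((k : ℚ) + 1 + r) * rStirlingEGF r (k + 1) := by
  simp only [rStirlingEGF, Derivation.leibniz, Derivation.leibniz_pow, derivative_rescale,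
    derivative_exp, map_sub, derivative_one, sub_zero, smul_eq_mul, map_add, map_natCast, map_one,
    Nat.add_sub_cancel]
  ring

theorem factorial_mul_coeff_rStirlingEGF (r m k : ℕ) :
    (m.factorial : ℚ) * coeff m (rStirlingEGF r k) = k.factorial * rStirling2 r (m + r) (k + r) := by
  induction m generalizing k with
  | zero => rw [zero_add, coeff_zero_rStirlingEGF, rStirling2_self_add]; split_ifs <;> simp_all
  | succ m ih =>
    have hcoeff : ((m + 1).factorial : ℚ) * coeff (m + 1) (rStirlingEGF r k) =
        m.factorial * coeff m (d⁄dX ℚ (rStirlingEGF r k)) := by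
      rw [coeff_derivative, Nat.factorial_succ]; push_cast; ring
    rw [hcoeff, show m + 1 + r = m + r + 1 by ring]
    rcases k with _ | k
    · rw [derivative_rStirlingEGF_zero, coeff_C_mul, zero_add, rStirling2_succ_self (by omega)]
      have h0 := ih 0
      rw [zero_add] at h0
      push_cast
      linear_combination (r : ℚ) * h0
    · rw [derivative_rStirlingEGF_succ, map_add, coeff_C_mul, coeff_C_mul,
        show k + 1 + r = (k + r) + 1 by ring, rStirling2_succ_succ (by omega)]
      have h1 := ih k
      have h2 := ih (k + 1)
      rw [show k + 1 + r = (k + r) + 1 by ring] at h2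
      rw [Nat.factorial_succ] at h2 ⊢
      push_cast at h1 h2 ⊢
      linear_combination ((k : ℚ) + 1) * h1 + ((k : ℚ) + 1 + r) * h2

theorem negOrder_bernoulli_eq_rStirling2 (n r k : ℕ) :
    (n.factorial : ℚ) * PowerSeries.coeff (R := ℚ) n
        ((PowerSeries.mk fun i => (1 : ℚ) / (i + 1).factorial) ^ k *
          PowerSeries.mk fun i => (r : ℚ) ^ i / i.factorial)
      = (((n + k).choose k : ℚ))⁻¹ * rStirling2 r (n + r + k) (k + r) := by
  have hshift : coeff n (mk (fun i => (1 : ℚ) / (i + 1).factorial) ^ k *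
      mk fun i => (r : ℚ) ^ i / i.factorial) = coeff (n + k) (rStirlingEGF r k) := by
    rw [rStirlingEGF, ← X_mul_mk_inv_factorial_succ, mk_pow_div_factorial, mul_pow, mul_assoc,
      coeff_X_pow_mul]
  have hegf := factorial_mul_coeff_rStirlingEGF r (n + k) k
  rw [show n + k + r = n + r + k by ring] at hegf
  rw [hshift, Nat.cast_choose ℚ (Nat.le_add_left k n), Nat.add_sub_cancel]
  field_simp
  linear_combination hegf
end

section
/- The n-th ordinary Bernoulli polynomial evaluated at a natural number r satisfies, for all n, r ≥ 0: B_n(r) = (n+1) * C(2n, n)^{-1} * ∑_{j=0}^{n} ((-1)^j / (j+1)) * C(2n, n+j) * S_r(n+r+j, r+j), where S_r denotes the r-Stirling number of the second kind. -/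
theorem rStirling2_self (r k : ℕ) : rStirling2 r r k = if k = r then 1 else 0 := by
  cases r <;> simp [rStirling2]

theorem rStirling2_eq_zero_of_lt {r k : ℕ} (hk : k < r) (n : ℕ) : rStirling2 r n k = 0 := by
  induction n generalizing k with
  | zero => simp [rStirling2]; omega
  | succ n ih =>
    rw [rStirling2]
    split_ifs <;> simp_all [ih (k := k - 1) (by omega)]

theorem rStirling2_add_succ (r m j : ℕ) :
    rStirling2 r (m + r + 1) (j + r) =
      (if j = 0 then 0 else rStirling2 r (m + r) (j - 1 + r)) +
        (j + r) * rStirling2 r (m + r) (j + r) := by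
  rw [rStirling2, if_neg (by omega), if_neg (by omega)]
  congr 1
  rcases j with _ | j
  · rcases r with _ | r
    · simp
    · simp [rStirling2_eq_zero_of_lt (Nat.lt_succ_self r)]
  · simp [show j + 1 + r - 1 = j + r by omega]

open PowerSeries Nat Finset

section ExpAlgebra

variable {A : Type*} [CommRing A] [Algebra ℚ A]

theorem derivative_rescale_exp (a : A) :
    d⁄dX A (rescale a (exp A)) = C a * rescale a (exp A) := by
  ext n
  rw [coeff_derivative, coeff_C_mul, coeff_rescale, coeff_rescale, coeff_exp, coeff_exp,
    pow_succ]
  have h : ((n : A) + 1) * algebraMap ℚ A (1 / (n + 1)!) = algebraMap ℚ A (1 / n !) := by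
    rw [show ((n : A) + 1) = algebraMap ℚ A (n + 1) by simp, ← map_mul]
    congr 1
    rw [Nat.factorial_succ]; push_cast; field_simp
  linear_combination (a ^ n * a) * h

theorem derivative_exp : d⁄dX A (exp A) = exp A := by
  simpa [rescale_one] using derivative_rescale_exp (1 : A)

theorem derivative_rescale_exp_mul_exp_sub_one_pow (a : A) (j : ℕ) :
    d⁄dX A (rescale a (exp A) * (exp A - 1) ^ j) =
      C (a + j) * (rescale a (exp A) * (exp A - 1) ^ j) +
        C (j : A) * (rescale a (exp A) * (exp A - 1) ^ (j - 1)) := by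
  rw [Derivation.leibniz, derivative_pow, derivative_rescale_exp, map_sub, derivative_one,
    derivative_exp, smul_eq_mul, smul_eq_mul]
  rcases j with _ | j
  · simp
  · simp only [map_add, map_natCast, Nat.add_sub_cancel, pow_succ]
    ring

theorem X_pow_two_dvd_X_sub_exp_sub_one :
    (X : A⟦X⟧) ^ 2 ∣ X - (exp A - 1) := by
  rw [X_pow_dvd_iff]
  intro m hm
  interval_cases m <;> simp [coeff_exp]

end ExpAlgebra

theorem factorial_mul_coeff_rescale_exp_mul_exp_sub_one_pow (r m j : ℕ) :
    (m ! : ℚ) * coeff m (rescale (r : ℚ) (exp ℚ) * (exp ℚ - 1) ^ j) =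
      j ! * rStirling2 r (m + r) (j + r) := by
  induction m generalizing j with
  | zero => cases j <;> simp [rStirling2_self]
  | succ m ih =>
    have hd := congrArg (coeff m) (derivative_rescale_exp_mul_exp_sub_one_pow (r : ℚ) j)
    rw [coeff_derivative, map_add, coeff_C_mul, coeff_C_mul] at hd
    rw [show m + 1 + r = m + r + 1 by omega, rStirling2_add_succ, Nat.factorial_succ]
    rcases j with _ | j
    · have h0 := ih 0
      simp only [pow_zero, mul_one, Nat.cast_zero, add_zero, zero_mul, zero_add, factorial_zero,
        one_mul, ↓reduceIte, Nat.cast_mul, Nat.cast_succ] at hd h0 ⊢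
      linear_combination (m ! : ℚ) * hd + r * h0
    · have h1 := ih j
      have h2 := ih (j + 1)
      simp only [Nat.add_sub_cancel, Nat.factorial_succ] at hd h1 h2 ⊢
      push_cast at hd h1 h2 ⊢
      linear_combination (m ! : ℚ) * hd + (r + j + 1) * h2 + (j + 1) * h1

theorem pow_succ_sub_sub_pow_succ {R : Type*} [CommRing R] (a b : R) (n : ℕ) :
    a ^ (n + 1) - (a - b) ^ (n + 1) =
      b * ∑ j ∈ range (n + 1), (-1) ^ j * ((n + 1).choose (j + 1) : R) * b ^ j * a ^ (n - j) := by
  rw [sub_eq_neg_add a b, add_pow, sum_range_succ', mul_sum]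
  simp only [pow_zero, one_mul, Nat.sub_zero, Nat.choose_zero_right, Nat.cast_one, mul_one,
    Nat.add_sub_add_right]
  rw [sub_add_cancel_right, ← sum_neg_distrib]
  refine sum_congr rfl fun j _ => ?_
  ring

theorem bernoulli_eval_div_factorial (n : ℕ) (x : ℚ) :
    (Polynomial.bernoulli n).eval x / n ! =
      ∑ j ∈ range (n + 1), (-1) ^ j * ((n + 1).choose (j + 1) : ℚ) *
        coeff (n + j) (rescale x (exp ℚ) * (exp ℚ - 1) ^ j) := by
  set H : ℚ⟦X⟧ := exp ℚ - 1
  set B : ℚ⟦X⟧ := mk fun m => (Polynomial.bernoulli m).eval x / (m ! : ℚ)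
  set P : ℚ⟦X⟧ :=
    ∑ j ∈ range (n + 1), (-1) ^ j * ((n + 1).choose (j + 1) : ℚ⟦X⟧) * H ^ j * X ^ (n - j)
  have hB : B * H = X * rescale x (exp ℚ) := by
    convert Polynomial.bernoulli_generating_function x using 3
    ext m
    simp [Polynomial.coe_aeval_eq_eval, div_eq_inv_mul]
  have hW : X ^ (2 * n + 2) ∣ (X - H) ^ (n + 1) := by
    rw [show 2 * n + 2 = 2 * (n + 1) by ring, pow_mul]
    exact pow_dvd_pow_of_dvd X_pow_two_dvd_X_sub_exp_sub_one (n + 1)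
  have hBP : X * (rescale x (exp ℚ) * P) = B * X ^ (n + 1) - B * (X - H) ^ (n + 1) := by
    rw [← mul_assoc, ← hB, mul_assoc, ← mul_sub, pow_succ_sub_sub_pow_succ]
  have hcoeff := congrArg (coeff (2 * n + 1)) hBP
  rw [coeff_succ_X_mul, map_sub, show 2 * n + 1 = n + (n + 1) by ring, coeff_mul_X_pow,
    (X_pow_dvd_iff.mp (hW.mul_left B)) _ (by omega), sub_zero, coeff_mk] at hcoeff
  rw [← hcoeff, mul_sum, map_sum]
  refine sum_congr rfl fun j hj => ?_
  rw [show 2 * n = n + j + (n - j) by grind, ← coeff_C_mul, ← coeff_mul_X_pow _ (n - j) (n + j)]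
  congr 1
  simp only [map_mul, map_pow, map_natCast, map_neg, map_one]
  ring

theorem choose_two_mul_add_div_choose_two_mul {n j : ℕ} (hj : j ≤ n) :
    ((n : ℚ) + 1) / (j + 1) * ((2 * n).choose (n + j) / (2 * n).choose n) =
      n ! * (n + 1).choose (j + 1) * j ! / (n + j)! := by
  rw [Nat.cast_choose ℚ (by omega : n + j ≤ 2 * n), Nat.cast_choose ℚ (by omega : n ≤ 2 * n),
    Nat.cast_choose ℚ (by omega : j + 1 ≤ n + 1), show 2 * n - (n + j) = n - j by omega,
    show 2 * n - n = n by omega, show n + 1 - (j + 1) = n - j by omega,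
    Nat.factorial_succ n, Nat.factorial_succ j]
  push_cast
  field_simp

theorem bernoulli_poly_at_nat_eq_sum_rStirling2 (n r : ℕ) :
    (Polynomial.bernoulli n).eval (r : ℚ) =
      ((n : ℚ) + 1) * (((2 * n).choose n : ℚ))⁻¹ *
        ∑ j ∈ Finset.range (n + 1),
          ((-1 : ℚ) ^ j / (j + 1)) * ((2 * n).choose (n + j)) *
            rStirling2 r (n + r + j) (r + j) := by
  rw [← mul_div_cancel₀ ((Polynomial.bernoulli n).eval (r : ℚ)) (by positivity : (n ! : ℚ) ≠ 0),
    bernoulli_eval_div_factorial, mul_sum, mul_sum]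
  refine sum_congr rfl fun j hj => ?_
  have hcoeff : coeff (n + j) (rescale (r : ℚ) (exp ℚ) * (exp ℚ - 1) ^ j) =
      (j ! : ℚ) * rStirling2 r (n + j + r) (j + r) / (n + j)! := by
    rw [eq_div_iff (by positivity), mul_comm]
    exact factorial_mul_coeff_rescale_exp_mul_exp_sub_one_pow r (n + j) j
  rw [hcoeff, show n + r + j = n + j + r by ring, add_comm r j]
  linear_combination (-(-1 : ℚ) ^ j * rStirling2 r (n + j + r) (j + r)) *
    choose_two_mul_add_div_choose_two_mul (Finset.mem_range_succ_iff.mp hj)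
end
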